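/- arXiv:2512.11504 — 2 statements merged into one kernel-verified Lean document; each statement's English description precedes it below -/
import Mathlib

section
/- Let H be a graph with a non-loop edge e, and let G be a two-terminal graph. Let H(G)_e be the graph obtained from H by deleting e and gluing in a copy of G, identifying the source and sink of G with the endpoints of e. Then R(H(G)_e; p) = S(G;p)·R(H∖e;p) + R(G;p)·R(H/e;p) as polynomials in p. -/
open scoped Classical

/-- A (multi)graph: a vertex type, a finite edge type, and an endpoint map
sending each edge to an unordered pair of vertices. -/
structure Multigraph where
  V : Type
  E : Type
  [fintE : Fintype E]
  ends : E → Sym2 V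

attribute [instance] Multigraph.fintE

namespace Multigraph

/-- The simple graph on the vertices of `G` induced by a set `A` of edges:
two distinct vertices are adjacent if some edge of `A` joins them. -/
def graphOf (G : Multigraph) (A : Finset G.E) : SimpleGraph G.V where
  Adj u v := u ≠ v ∧ ∃ e ∈ A, G.ends e = s(u, v)
  symm := by
    constructor
    rintro u v ⟨h, e, he, hev⟩
    exact ⟨h.symm, e, he, by rw [hev, Sym2.eq_swap]⟩
  loopless := by constructor; rintro v ⟨h, -⟩; exact h rfl

/-- The (all-terminal) reliability polynomial of `G`, evaluated at the edge
failure probability `p`. -/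
noncomputable def rel (G : Multigraph) (p : ℂ) : ℂ :=
  ∑ A : Finset G.E,
    if (G.graphOf A).Connected then (1 - p) ^ A.card * p ^ (Fintype.card G.E - A.card) else 0

end Multigraph

/-- A two-terminal graph: a multigraph together with two distinct distinguished
vertices, the source `s` and the sink `t`. -/
structure TTGraph extends Multigraph where
  s : V
  t : V
  hst : s ≠ t

namespace TTGraph

/-- The reliability polynomial of a two-terminal graph. -/
noncomputable def rel (G : TTGraph) (p : ℂ) : ℂ := G.toMultigraph.rel p

/-- `A` is an `s`–`t` split: every vertex is joined by a path (within `A`) to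
exactly one of `s`, `t`. -/
def IsSplit (G : TTGraph) (A : Finset G.toMultigraph.E) : Prop :=
  ∀ v : G.V, Xor' ((G.toMultigraph.graphOf A).Reachable v G.s)
    ((G.toMultigraph.graphOf A).Reachable v G.t)

/-- The split reliability polynomial of a two-terminal graph. -/
noncomputable def split (G : TTGraph) (p : ℂ) : ℂ :=
  ∑ A : Finset G.toMultigraph.E,
    if G.IsSplit A then (1 - p) ^ A.card * p ^ (Fintype.card G.toMultigraph.E - A.card) else 0

/-- The effective edge interaction `y_G(p)`. -/
noncomputable def yEff (G : TTGraph) (p : ℂ) : ℂ := (1 - p) * G.split p / G.rel p + 1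

/-- The virtual edge interaction `ŷ_G(p)`. -/
noncomputable def yVirt (G : TTGraph) (p : ℂ) : ℂ := G.rel p / G.split p + 1

/-- The identifications made in the parallel composition: the two sources are
identified and the two sinks are identified. -/
def parRel (G₁ G₂ : TTGraph) : (G₁.V ⊕ G₂.V) → (G₁.V ⊕ G₂.V) → Prop :=
  fun a b => (a = .inl G₁.s ∧ b = .inr G₂.s) ∨ (a = .inl G₁.t ∧ b = .inr G₂.t)

/-- The parallel composition `G₁ ∥ G₂` of two two-terminal graphs. -/
noncomputable def par (G₁ G₂ : TTGraph) : TTGraph where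
  V := Quot (parRel G₁ G₂)
  E := G₁.toMultigraph.E ⊕ G₂.toMultigraph.E
  ends := Sum.elim (fun e => (G₁.ends e).map (Quot.mk _ ∘ Sum.inl))
    (fun e => (G₂.ends e).map (Quot.mk _ ∘ Sum.inr))
  s := Quot.mk _ (.inl G₁.s)
  t := Quot.mk _ (.inl G₁.t)
  hst := by
    intro h
    have hresp : ∀ a b, parRel G₁ G₂ a b →
        (Sum.elim (fun v => v = G₁.t) (fun v => v = G₂.t) a : Prop) =
        (Sum.elim (fun v => v = G₁.t) (fun v => v = G₂.t) b : Prop) := by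
      rintro a b (⟨rfl, rfl⟩ | ⟨rfl, rfl⟩) <;> simp [G₁.hst, G₂.hst]
    have := congrArg (Quot.lift _ hresp) h
    simp [G₁.hst] at this

/-- The identification made in the series composition: the sink of `G₁` is
identified with the source of `G₂`. -/
def serRel (G₁ G₂ : TTGraph) : (G₁.V ⊕ G₂.V) → (G₁.V ⊕ G₂.V) → Prop :=
  fun a b => a = .inl G₁.t ∧ b = .inr G₂.s

/-- The series composition `G₁ ⋈ G₂` of two two-terminal graphs. -/
noncomputable def ser (G₁ G₂ : TTGraph) : TTGraph where
  V := Quot (serRel G₁ G₂)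
  E := G₁.toMultigraph.E ⊕ G₂.toMultigraph.E
  ends := Sum.elim (fun e => (G₁.ends e).map (Quot.mk _ ∘ Sum.inl))
    (fun e => (G₂.ends e).map (Quot.mk _ ∘ Sum.inr))
  s := Quot.mk _ (.inl G₁.s)
  t := Quot.mk _ (.inr G₂.t)
  hst := by
    intro h
    have hresp : ∀ a b, serRel G₁ G₂ a b →
        (Sum.elim (fun v => v = G₁.t) (fun _ => True) a : Prop) =
        (Sum.elim (fun v => v = G₁.t) (fun _ => True) b : Prop) := by
      rintro a b ⟨rfl, rfl⟩; simp
    have := congrArg (Quot.lift _ hresp) h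
    simp [G₁.hst] at this

end TTGraph

namespace Multigraph

/-- Deletion of an edge. -/
noncomputable def delete (G : Multigraph) (e : G.E) : Multigraph where
  V := G.V
  E := {e' : G.E // e' ≠ e}
  ends := fun e' => G.ends e'.1

/-- Contraction of an edge: its two endpoints are identified, and the edge is removed. -/
noncomputable def contract (G : Multigraph) (e : G.E) : Multigraph where
  V := Quot (fun a b => G.ends e = s(a, b))
  E := {e' : G.E // e' ≠ e}
  ends := fun e' => (G.ends e'.1).map (Quot.mk _)

end Multigraph

/-- The identifications for gluing a two-terminal graph `G` in place of an edge with
endpoints `u`, `v`: the source of `G` is identified with `u`, the sink with `v`. -/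
def substRel (H : Multigraph) (u v : H.V) (G : TTGraph) :
    (H.V ⊕ G.V) → (H.V ⊕ G.V) → Prop :=
  fun a b => (a = .inl u ∧ b = .inr G.s) ∨ (a = .inl v ∧ b = .inr G.t)

/-- The graph `H(G)_e` obtained from `H` by deleting the edge `e` (with endpoints
`u`, `v`) and gluing in a copy of `G`, identifying the source of `G` with `u`
and the sink of `G` with `v`. -/
noncomputable def Multigraph.substEdge (H : Multigraph) (e : H.E) (u v : H.V) (G : TTGraph) :
    Multigraph where
  V := Quot (substRel H u v G)
  E := {e' : H.E // e' ≠ e} ⊕ G.toMultigraph.E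
  ends := Sum.elim (fun e' => (H.ends e'.1).map (Quot.mk _ ∘ Sum.inl))
    (fun f => (G.ends f).map (Quot.mk _ ∘ Sum.inr))

/-! A spanning subgraph of `H(G)_e` is a pair `(A₁, A₂)` of edge sets of `H ∖ e` and of `G`,
and it is connected iff every vertex of `H` reaches `u` or `v` through `A₁`, every vertex of `G`
reaches `s` or `t` through `A₂`, and `u, v` are joined through `A₁` or `s, t` through `A₂`.
When `s, t` are not joined this says that `A₂` is a split of `G` and `A₁` connects `H ∖ e`;
when they are, that `A₂` connects `G` and `A₁` connects `H / e`. The weight of `(A₁, A₂)` is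
the product of the weights of `A₁` and `A₂`, so summing over the two disjoint cases gives the
formula. -/

theorem SimpleGraph.connected_iff_reachable_and_forall_reachable_or_reachable {V : Type*}
    (Γ : SimpleGraph V) (a b : V) :
    Γ.Connected ↔ Γ.Reachable a b ∧ ∀ x, Γ.Reachable x a ∨ Γ.Reachable x b := by
  refine ⟨fun h => ⟨h.preconnected a b, fun x => .inl (h.preconnected x a)⟩, ?_⟩
  rintro ⟨hab, hcover⟩
  have : Nonempty V := ⟨a⟩
  have hto_a : ∀ x, Γ.Reachable x a := fun x => (hcover x).elim id (·.trans hab.symm)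
  exact ⟨fun x y => (hto_a x).trans (hto_a y).symm⟩

theorem iff_of_quot_mk_eq {X : Type*} {r : X → X → Prop} (P : X → Prop)
    (hP : ∀ a b, r a b → (P a ↔ P b)) {x y : X} (h : Quot.mk r x = Quot.mk r y) : P x ↔ P y :=
  Iff.of_eq (congrArg (Quot.lift P fun a b hab => propext (hP a b hab)) h)

namespace Multigraph

theorem exists_ends_eq (M : Multigraph) (e : M.E) : ∃ a b, M.ends e = s(a, b) :=
  Sym2.ind (fun a b => ⟨a, b, rfl⟩) (M.ends e)

theorem graphOf_reachable_of_mem {M : Multigraph} {A : Finset M.E} {e : M.E} (he : e ∈ A)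
    {a b : M.V} (hab : M.ends e = s(a, b)) : (M.graphOf A).Reachable a b := by
  by_cases h : a = b
  · subst h; rfl
  · exact SimpleGraph.Adj.reachable ⟨h, e, he, hab⟩

theorem imp_of_graphOf_reachable {N : Multigraph} {B : Finset N.E} {X : Type*} (f : X → N.V)
    (P : X → Prop) (hf : ∀ x y, f x = f y → P x → P y)
    (hB : ∀ e ∈ B, ∃ x y, N.ends e = s(f x, f y) ∧ (P x ↔ P y))
    {x y : X} (h : (N.graphOf B).Reachable (f x) (f y)) (hx : P x) : P y := by
  suffices ∀ w, (N.graphOf B).Reachable (f x) w → ∀ z, f z = w → P z from this _ h y rfl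
  intro w hw
  rw [SimpleGraph.reachable_iff_reflTransGen] at hw
  induction hw with
  | refl => exact fun z hz => hf x z hz.symm hx
  | tail _ hadj ih =>
    obtain ⟨-, e, he, hends⟩ := hadj
    obtain ⟨x', y', hxy, hPxy⟩ := hB e he
    intro z hz
    rcases Sym2.eq_iff.1 (hends.symm.trans hxy) with ⟨h₁, h₂⟩ | ⟨h₁, h₂⟩
    · exact hf y' z (h₂.symm.trans hz.symm) (hPxy.1 (ih x' h₁.symm))
    · exact hf x' z (h₂.symm.trans hz.symm) (hPxy.2 (ih y' h₁.symm))

theorem graphOf_reachable_map {M N : Multigraph} (f : M.V → N.V) {A : Finset M.E}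
    {B : Finset N.E} (hAB : ∀ e ∈ A, ∃ e' ∈ B, N.ends e' = (M.ends e).map f) {x y : M.V}
    (h : (M.graphOf A).Reachable x y) : (N.graphOf B).Reachable (f x) (f y) := by
  refine imp_of_graphOf_reachable id (fun z => (N.graphOf B).Reachable (f x) (f z))
    (by rintro _ _ rfl; exact id) (fun e he => ?_) h (.refl _)
  obtain ⟨a, b, hab⟩ := M.exists_ends_eq e
  obtain ⟨e', he', hends⟩ := hAB e he
  have hfab := graphOf_reachable_of_mem he' (by rw [hends, hab, Sym2.map_mk])
  exact ⟨a, b, hab, fun h => h.trans hfab, fun h => h.trans hfab.symm⟩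

theorem contract_graphOf_connected_iff {H : Multigraph} {e : H.E} {u v : H.V}
    (hends : H.ends e = s(u, v)) (A : Finset (H.delete e).E) :
    ((H.contract e).graphOf A).Connected ↔
      ∀ a, ((H.delete e).graphOf A).Reachable a u ∨ ((H.delete e).graphOf A).Reachable a v := by
  set D := (H.delete e).graphOf A
  have hmk : ∀ {a b}, D.Reachable a b →
      ((H.contract e).graphOf A).Reachable (Quot.mk _ a) (Quot.mk _ b) :=
    graphOf_reachable_map (M := H.delete e) (N := H.contract e) _ fun e' he' => ⟨e', he', rfl⟩
  have huv : (Quot.mk _ u : (H.contract e).V) = Quot.mk _ v := Quot.sound hends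
  constructor
  · intro hC a
    let P : H.V → Prop := fun a => D.Reachable a u ∨ D.Reachable a v
    refine imp_of_graphOf_reachable (N := H.contract e) (Quot.mk _) P ?_ (fun e' he' => ?_)
      (hC.preconnected _ _) (.inl (.refl u))
    · refine fun x y hxy => (iff_of_quot_mk_eq P (fun a b hab => ?_) hxy).1
      rw [hends, Sym2.eq_iff] at hab
      rcases hab with ⟨rfl, rfl⟩ | ⟨rfl, rfl⟩
      · exact iff_of_true (.inl (.refl _)) (.inr (.refl _))
      · exact iff_of_true (.inr (.refl _)) (.inl (.refl _))
    · obtain ⟨a, b, hab⟩ := H.exists_ends_eq e'.1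
      have hD : D.Reachable a b := graphOf_reachable_of_mem he' hab
      refine ⟨a, b, by rw [show (H.contract e).ends e' = (H.ends e'.1).map (Quot.mk _) from rfl,
        hab, Sym2.map_mk]; rfl, ?_⟩
      exact or_congr ⟨hD.symm.trans, hD.trans⟩ ⟨hD.symm.trans, hD.trans⟩
  · intro hcover
    refine (SimpleGraph.connected_iff_reachable_and_forall_reachable_or_reachable _
      (Quot.mk _ u) (Quot.mk _ u)).2 ⟨.refl _, Quot.ind fun a => .inl ?_⟩
    rcases hcover a with h | h
    · exact hmk h
    · exact huv ▸ hmk h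

end Multigraph

theorem TTGraph.isSplit_iff (G : TTGraph) (A : Finset G.E) :
    G.IsSplit A ↔ (∀ x, (G.graphOf A).Reachable x G.s ∨ (G.graphOf A).Reachable x G.t) ∧
      ¬(G.graphOf A).Reachable G.s G.t := by
  constructor
  · intro h
    refine ⟨fun x => Xor.or (h x), fun hst => ?_⟩
    rcases h G.s with ⟨-, hn⟩ | ⟨-, hn⟩
    · exact hn hst
    · exact hn (.refl _)
  · rintro ⟨hcover, hst⟩ x
    rcases hcover x with h | h
    · exact .inl ⟨h, fun h' => hst (h.symm.trans h')⟩
    · exact .inr ⟨h, fun h' => hst (h'.symm.trans h)⟩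

theorem TTGraph.IsSplit.not_connected {G : TTGraph} {A : Finset G.E} (hA : G.IsSplit A) :
    ¬(G.graphOf A).Connected :=
  fun hC => (G.isSplit_iff A |>.1 hA).2 (hC.preconnected _ _)

namespace Multigraph

variable {H : Multigraph} {e : H.E} {u v : H.V} {G : TTGraph} {A₁ : Finset (H.delete e).E}
  {A₂ : Finset G.E}

theorem substEdge_reachable_inl {a b : H.V} (h : ((H.delete e).graphOf A₁).Reachable a b) :
    ((H.substEdge e u v G).graphOf (A₁.disjSum A₂)).Reachable
      (Quot.mk (substRel H u v G) (.inl a)) (Quot.mk (substRel H u v G) (.inl b)) :=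
  graphOf_reachable_map (M := H.delete e) (N := H.substEdge e u v G)
    (fun a => Quot.mk _ (.inl a)) (fun e₁ he₁ => ⟨.inl e₁, Finset.inl_mem_disjSum.2 he₁, rfl⟩) h

theorem substEdge_reachable_inr {a b : G.V} (h : (G.graphOf A₂).Reachable a b) :
    ((H.substEdge e u v G).graphOf (A₁.disjSum A₂)).Reachable
      (Quot.mk (substRel H u v G) (.inr a)) (Quot.mk (substRel H u v G) (.inr b)) :=
  graphOf_reachable_map (M := G.toMultigraph) (N := H.substEdge e u v G)
    (fun a => Quot.mk _ (.inr a)) (fun f hf => ⟨.inr f, Finset.inr_mem_disjSum.2 hf, rfl⟩) h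

theorem imp_of_substEdge_reachable (P : H.V ⊕ G.V → Prop)
    (hrel : ∀ x y, substRel H u v G x y → (P x ↔ P y))
    (hH : ∀ a b, ((H.delete e).graphOf A₁).Reachable a b → (P (.inl a) ↔ P (.inl b)))
    (hG : ∀ a b, (G.graphOf A₂).Reachable a b → (P (.inr a) ↔ P (.inr b))) {x y : H.V ⊕ G.V}
    (h : ((H.substEdge e u v G).graphOf (A₁.disjSum A₂)).Reachable (Quot.mk _ x) (Quot.mk _ y))
    (hx : P x) : P y := by
  refine imp_of_graphOf_reachable (N := H.substEdge e u v G) (Quot.mk _) P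
    (fun x y hxy => (iff_of_quot_mk_eq P hrel hxy).1) ?_ h hx
  rintro (e₁ | f) he
  · obtain ⟨a, b, hab⟩ := H.exists_ends_eq e₁.1
    refine ⟨.inl a, .inl b, ?_,
      hH a b (graphOf_reachable_of_mem (Finset.inl_mem_disjSum.1 he) hab)⟩
    show (H.ends e₁.1).map _ = _
    rw [hab, Sym2.map_mk]; rfl
  · obtain ⟨a, b, hab⟩ := G.exists_ends_eq f
    refine ⟨.inr a, .inr b, ?_,
      hG a b (graphOf_reachable_of_mem (Finset.inr_mem_disjSum.1 he) hab)⟩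
    show (G.ends f).map _ = _
    rw [hab, Sym2.map_mk]; rfl

theorem substEdge_graphOf_connected_iff :
    ((H.substEdge e u v G).graphOf (A₁.disjSum A₂)).Connected ↔
      (∀ a, ((H.delete e).graphOf A₁).Reachable a u ∨ ((H.delete e).graphOf A₁).Reachable a v) ∧
      (∀ d, (G.graphOf A₂).Reachable d G.s ∨ (G.graphOf A₂).Reachable d G.t) ∧
      (((H.delete e).graphOf A₁).Reachable u v ∨ (G.graphOf A₂).Reachable G.s G.t) := by
  set D := (H.delete e).graphOf A₁
  set Γ := G.graphOf A₂
  have hs : (Quot.mk _ (.inl u) : (H.substEdge e u v G).V) = Quot.mk _ (.inr G.s) :=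
    Quot.sound (.inl ⟨rfl, rfl⟩)
  have ht : (Quot.mk _ (.inl v) : (H.substEdge e u v G).V) = Quot.mk _ (.inr G.t) :=
    Quot.sound (.inr ⟨rfl, rfl⟩)
  constructor
  · intro hK
    let P : H.V ⊕ G.V → Prop := Sum.elim (fun a => D.Reachable a u ∨ D.Reachable a v)
      (fun d => Γ.Reachable d G.s ∨ Γ.Reachable d G.t)
    have hcover : ∀ x, P x := fun x =>
      imp_of_substEdge_reachable P
        (by rintro _ _ (⟨rfl, rfl⟩ | ⟨rfl, rfl⟩)
            · exact iff_of_true (.inl (.refl _)) (.inl (.refl _))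
            · exact iff_of_true (.inr (.refl _)) (.inr (.refl _)))
        (fun a b hab => or_congr ⟨hab.symm.trans, hab.trans⟩ ⟨hab.symm.trans, hab.trans⟩)
        (fun a b hab => or_congr ⟨hab.symm.trans, hab.trans⟩ ⟨hab.symm.trans, hab.trans⟩)
        (hK.preconnected (Quot.mk _ (.inl u)) _) (.inl (.refl u))
    refine ⟨fun a => hcover (.inl a), fun d => hcover (.inr d),
      or_iff_not_imp_left.2 fun huv => ?_⟩
    by_contra hst
    -- The component of `u` in `D` together with that of `s` in `Γ` would then be a union of
    -- components of the glued graph that misses `v`.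
    let Q : H.V ⊕ G.V → Prop := Sum.elim (D.Reachable · u) (Γ.Reachable · G.s)
    refine huv (imp_of_substEdge_reachable Q ?_
      (fun a b hab => ⟨hab.symm.trans, hab.trans⟩) (fun a b hab => ⟨hab.symm.trans, hab.trans⟩)
      (hK.preconnected (Quot.mk _ (.inl u)) (Quot.mk _ (.inl v))) (.refl u)).symm
    rintro _ _ (⟨rfl, rfl⟩ | ⟨rfl, rfl⟩)
    · exact iff_of_true (.refl _) (.refl _)
    · exact iff_of_false (fun h => huv h.symm) (fun h => hst h.symm)
  · rintro ⟨hH, hG, huv⟩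
    refine (SimpleGraph.connected_iff_reachable_and_forall_reachable_or_reachable _
      (Quot.mk _ (.inl u)) (Quot.mk _ (.inl v))).2 ⟨?_, Quot.ind ?_⟩
    · rcases huv with h | h
      · exact substEdge_reachable_inl h
      · rw [hs, ht]; exact substEdge_reachable_inr h
    · rintro (a | d)
      · exact (hH a).imp substEdge_reachable_inl substEdge_reachable_inl
      · rw [hs, ht]
        exact (hG d).imp substEdge_reachable_inr substEdge_reachable_inr

theorem substEdge_graphOf_connected_iff_isSplit_or (hends : H.ends e = s(u, v)) :
    ((H.substEdge e u v G).graphOf (A₁.disjSum A₂)).Connected ↔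
      G.IsSplit A₂ ∧ ((H.delete e).graphOf A₁).Connected ∨
        (G.graphOf A₂).Connected ∧ ((H.contract e).graphOf A₁).Connected := by
  rw [substEdge_graphOf_connected_iff, G.isSplit_iff, contract_graphOf_connected_iff hends,
    SimpleGraph.connected_iff_reachable_and_forall_reachable_or_reachable
      ((H.delete e).graphOf A₁) u v,
    SimpleGraph.connected_iff_reachable_and_forall_reachable_or_reachable _ G.s G.t]
  tauto

end Multigraph

noncomputable def survivalWeight {α : Type*} [Fintype α] (p : ℂ) (A : Finset α) : ℂ :=
  (1 - p) ^ A.card * p ^ (Fintype.card α - A.card)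

theorem survivalWeight_disjSum {α β : Type*} [Fintype α] [Fintype β] (p : ℂ) (A : Finset α)
    (B : Finset β) : survivalWeight p (A.disjSum B) = survivalWeight p A * survivalWeight p B := by
  have hA := A.card_le_univ
  have hB := B.card_le_univ
  rw [survivalWeight, survivalWeight, survivalWeight, Finset.card_disjSum, Fintype.card_sum,
    show Fintype.card α + Fintype.card β - (A.card + B.card)
      = (Fintype.card α - A.card) + (Fintype.card β - B.card) by omega, pow_add, pow_add]
  ring

theorem sum_ite_survivalWeight_of_disjSum {α β : Type*} [Fintype α] [Fintype β] (p : ℂ)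
    (Φ : Finset (α ⊕ β) → Prop) (P₁ P₂ : Finset β → Prop) (Q₁ Q₂ : Finset α → Prop)
    (hΦ : ∀ A B, Φ (A.disjSum B) ↔ P₁ B ∧ Q₁ A ∨ P₂ B ∧ Q₂ A) (hP : ∀ B, ¬(P₁ B ∧ P₂ B)) :
    ∑ C, (if Φ C then survivalWeight p C else 0)
      = (∑ B, if P₁ B then survivalWeight p B else 0)
          * (∑ A, if Q₁ A then survivalWeight p A else 0)
        + (∑ B, if P₂ B then survivalWeight p B else 0)
          * (∑ A, if Q₂ A then survivalWeight p A else 0) := by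
  rw [← Finset.sumEquiv.symm.toEquiv.sum_comp, Fintype.sum_prod_type, Finset.sum_comm,
    Finset.sum_mul_sum, Finset.sum_mul_sum, ← Finset.sum_add_distrib]
  refine Finset.sum_congr rfl fun B _ => ?_
  rw [← Finset.sum_add_distrib]
  refine Finset.sum_congr rfl fun A _ => ?_
  rw [show Finset.sumEquiv.symm.toEquiv (A, B) = A.disjSum B from rfl, hΦ,
    survivalWeight_disjSum]
  by_cases h₁ : P₁ B
  · have h₂ : ¬P₂ B := fun h₂ => hP B ⟨h₁, h₂⟩
    simp [h₁, h₂, mul_comm]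
  · by_cases h₂ : P₂ B <;> simp [h₁, h₂, mul_comm]

theorem rel_substEdge_general (H : Multigraph) (e : H.E) (u v : H.V)
    (hends : H.ends e = s(u, v)) (G : TTGraph) (p : ℂ) :
    (H.substEdge e u v G).rel p
      = G.split p * (H.delete e).rel p + G.rel p * (H.contract e).rel p :=
  sum_ite_survivalWeight_of_disjSum p (fun C => ((H.substEdge e u v G).graphOf C).Connected)
    _ _ _ _
    (fun _ _ => Multigraph.substEdge_graphOf_connected_iff_isSplit_or hends)
    (fun _ h => h.1.not_connected h.2)

/-- Replacing a non-loop edge `e` of `H` (with endpoints `u ≠ v`) by a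
copy of a two-terminal graph `G` gives
`R(H(G)_e; p) = S(G;p)·R(H∖e;p) + R(G;p)·R(H/e;p)`. -/
theorem rel_substEdge (H : Multigraph) (e : H.E) (u v : H.V) (huv : u ≠ v)
    (hends : H.ends e = s(u, v)) (G : TTGraph) (p : ℂ) :
    (H.substEdge e u v G).rel p
      = G.split p * (H.delete e).rel p + G.rel p * (H.contract e).rel p :=
  rel_substEdge_general H e u v hends G p
end

section
/- Let H and G be two-terminal graphs with G connected, and let H(G) be obtained from H by substituting a copy of G for every edge. Then R(H(G);p) = (R(G;p)+S(G;p))^{|E(H)|} · R(H; 1/ŷ_G(p)) and S(H(G);p) = (R(G;p)+S(G;p))^{|E(H)|} · S(H; 1/ŷ_G(p)), where ŷ_G(p) = R(G;p)/S(G;p) + 1. Consequently ŷ_{H(G)}(p) = ŷ_H(1/ŷ_G(p)) as rational functions. -/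
open scoped Classical

/-- The identifications for substituting a copy of `G` for every edge of `H`, with
orientation `o` of the edges of `H`: for each edge `e`, the source of the copy of `G`
on `e` is identified with `(o e).1` and the sink with `(o e).2`. -/
def substAllRel (H G : TTGraph) (o : H.toMultigraph.E → H.V × H.V) :
    (H.V ⊕ H.toMultigraph.E × G.V) → (H.V ⊕ H.toMultigraph.E × G.V) → Prop :=
  fun a b => (∃ e, a = .inl (o e).1 ∧ b = .inr (e, G.s)) ∨
    (∃ e, a = .inl (o e).2 ∧ b = .inr (e, G.t))

/-- The two-terminal graph `H(G)` obtained from `H` by substituting a copy of `G` for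
every edge of `H` (oriented according to `o`). -/
noncomputable def TTGraph.substAll (H G : TTGraph) (o : H.toMultigraph.E → H.V × H.V) :
    TTGraph where
  V := Quot (substAllRel H G o)
  E := H.toMultigraph.E × G.toMultigraph.E
  ends := fun ef => (G.ends ef.2).map (Quot.mk _ ∘ Sum.inr ∘ Prod.mk ef.1)
  s := Quot.mk _ (.inl H.s)
  t := Quot.mk _ (.inl H.t)
  hst := by
    intro h
    have hresp : ∀ a b, substAllRel H G o a b →
        (Sum.elim id (fun ew => if ew.2 = G.s then (o ew.1).1 else
          if ew.2 = G.t then (o ew.1).2 else (o ew.1).1) a : H.V) =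
        (Sum.elim id (fun ew => if ew.2 = G.s then (o ew.1).1 else
          if ew.2 = G.t then (o ew.1).2 else (o ew.1).1) b : H.V) := by
      rintro a b (⟨e, rfl, rfl⟩ | ⟨e, rfl, rfl⟩) <;>
        simp [G.hst, (G.hst.symm : G.t ≠ G.s)]
    have := congrArg (Quot.lift _ hresp) h
    simp only [Sum.elim_inl, id] at this
    exact H.hst this

/-!
An edge set of `H(G)` is a family `(A_e)` of edge sets of the copies of `G`. It connects (resp.
splits) `H(G)` exactly when every `A_e` connects or splits `G` and the edges `e` whose copy is
connected form a connected (resp. split) edge set `B` of `H`: a connected copy acts as a present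
edge of `H`, a split copy as an absent one, which is seen by projecting each copy onto the ends of
its edge. Summing the weights, the copies on `B` contribute `R(G;p)` and the others `S(G;p)`,
so `R(H(G);p) = ∑_B [B connects H] R^|B| S^(m-|B|) = (R+S)^m R(H; S/(R+S))`, and
`S/(R+S) = 1/ŷ_G(p)`.
The same computation gives the split polynomial, and `ŷ` is the quotient of the two.
-/

open Finset Sum

namespace SimpleGraph

variable {V W : Type*} {G : SimpleGraph V} {u v : V}

theorem Reachable.map_of_adj {G' : SimpleGraph W} (g : V → W)
    (h : ∀ a b, G.Adj a b → G'.Reachable (g a) (g b)) (huv : G.Reachable u v) :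
    G'.Reachable (g u) (g v) := by
  obtain ⟨w⟩ := huv
  induction w with
  | nil => rfl
  | cons hadj _ ih => exact (h _ _ hadj).trans ih

theorem Reachable.iff_of_adj {P : V → Prop} (h : ∀ a b, G.Adj a b → (P a ↔ P b))
    (huv : G.Reachable u v) : P u ↔ P v := by
  obtain ⟨w⟩ := huv
  induction w with
  | nil => rfl
  | cons hadj _ ih => exact (h _ _ hadj).trans ih

end SimpleGraph

theorem Multigraph.reachable_graphOf_of_mem (G : Multigraph) {A : Finset G.E} {e : G.E}
    {a b : G.V} (he : e ∈ A) (hends : G.ends e = s(a, b)) : (G.graphOf A).Reachable a b := by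
  by_cases hab : a = b
  · rw [hab]
  · exact SimpleGraph.Adj.reachable ⟨hab, e, he, hends⟩

noncomputable def Finset.piEquivProd (ι κ : Type*) [Fintype ι] [Fintype κ] :
    (ι → Finset κ) ≃ Finset (ι × κ) where
  toFun f := {x | x.2 ∈ f x.1}
  invFun A i := {k | (i, k) ∈ A}
  left_inv f := by ext; simp
  right_inv A := by ext; simp

@[simp]
theorem Finset.mem_piEquivProd {ι κ : Type*} [Fintype ι] [Fintype κ] {f : ι → Finset κ}
    {x : ι × κ} : x ∈ piEquivProd ι κ f ↔ x.2 ∈ f x.1 := by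
  simp [piEquivProd]

theorem Fintype.prod_ite_mem_eq_pow_mul_pow {α M : Type*} [Fintype α] [CommMonoid M]
    (s : Finset α) (x y : M) :
    ∏ a, (if a ∈ s then x else y) = x ^ #s * y ^ (Fintype.card α - #s) := by
  rw [prod_ite, prod_const, prod_const, filter_mem_eq_inter, univ_inter, filter_not,
    filter_mem_eq_inter, univ_inter, card_sdiff_of_subset (subset_univ s), card_univ]

theorem Finset.pow_card_mul_pow_card_piEquivProd {ι κ M : Type*} [Fintype ι] [Fintype κ]
    [CommMonoid M] (f : ι → Finset κ) (x y : M) :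
    x ^ #(piEquivProd ι κ f) * y ^ (Fintype.card (ι × κ) - #(piEquivProd ι κ f)) =
      ∏ i, x ^ #(f i) * y ^ (Fintype.card κ - #(f i)) := by
  simp only [← Fintype.prod_ite_mem_eq_pow_mul_pow, Fintype.prod_prod_type, mem_piEquivProd]

theorem Fintype.prod_ite_mem_ite_ite {ι α R : Type*} [Fintype ι] [CommMonoidWithZero R]
    {C S : α → Prop} (hCS : ∀ a, C a → ¬ S a) (B : Finset ι) (f : ι → α)
    (w : α → R) :
    ∏ i, (if i ∈ B then (if C (f i) then w (f i) else 0)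
        else (if S (f i) then w (f i) else 0)) =
      if (∀ i, C (f i) ∨ S (f i)) ∧ ({i | C (f i)} : Finset ι) = B then ∏ i, w (f i)
      else 0 := by
  have hfactor : ∀ i, (if i ∈ B then (if C (f i) then w (f i) else 0)
      else (if S (f i) then w (f i) else 0)) =
        if (i ∈ B ∧ C (f i)) ∨ (i ∉ B ∧ S (f i)) then w (f i) else 0 := by
    intro i
    by_cases hi : i ∈ B <;> simp [hi]
  rw [Finset.prod_congr rfl fun i _ => hfactor i, Fintype.prod_ite_zero]
  congr 1
  refine propext ⟨fun h => ⟨fun i => ?_, ?_⟩, ?_⟩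
  · rcases h i with h | h
    exacts [.inl h.2, .inr h.2]
  · ext i
    rcases h i with h | h
    · simp [h.1, h.2]
    · simpa [h.1] using fun hC => hCS _ hC h.2
  · rintro ⟨h, rfl⟩ i
    rcases h i with hC | hS
    · exact .inl ⟨by simpa using hC, hC⟩
    · exact .inr ⟨by simpa using fun hC => hCS _ hC hS, hS⟩

theorem Fintype.sum_pi_ite_prod_eq {ι α R : Type*} [Fintype ι] [Fintype α] [CommSemiring R]
    {C S : α → Prop} (hCS : ∀ a, C a → ¬ S a) (Q : Finset ι → Prop) (w : α → R) :
    ∑ f : ι → α,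
        (if (∀ i, C (f i) ∨ S (f i)) ∧ Q {i | C (f i)} then ∏ i, w (f i) else 0) =
      ∑ B, if Q B then
        (∑ a with C a, w a) ^ #B * (∑ a with S a, w a) ^ (Fintype.card ι - #B) else 0 := by
  calc ∑ f : ι → α,
        (if (∀ i, C (f i) ∨ S (f i)) ∧ Q {i | C (f i)} then ∏ i, w (f i) else 0)
      = ∑ f : ι → α, ∑ B, if Q B then
          ∏ i, (if i ∈ B then (if C (f i) then w (f i) else 0)
            else (if S (f i) then w (f i) else 0)) else 0 := by
        refine Finset.sum_congr rfl fun f _ => ?_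
        simp only [prod_ite_mem_ite_ite hCS]
        rw [sum_eq_single ({i | C (f i)} : Finset ι) fun B hB => by simp [hB.symm]]
        simp [and_comm, ite_and]
    _ = ∑ B, if Q B then ∏ i, ∑ a, (if i ∈ B then (if C a then w a else 0)
          else (if S a then w a else 0)) else 0 := by
        rw [Finset.sum_comm]
        refine Finset.sum_congr rfl fun B _ => ?_
        split_ifs
        · rw [prod_sum]
        · exact sum_const_zero
    _ = _ := by
        simp only [sum_ite_irrel, ← sum_filter, prod_ite_mem_eq_pow_mul_pow]

theorem pow_mul_pow_eq_add_pow_mul {K : Type*} [Field K] {a b : K} (hab : a + b ≠ 0) {k m : ℕ}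
    (hk : k ≤ m) :
    a ^ k * b ^ (m - k) = (a + b) ^ m * ((a / (a + b)) ^ k * (b / (a + b)) ^ (m - k)) := by
  rw [div_pow, div_pow, ← Nat.add_sub_cancel' hk, pow_add, Nat.add_sub_cancel_left]
  field_simp

namespace TTGraph

theorem not_isSplit_of_connected (G : TTGraph) {X : Finset G.E}
    (hX : (G.graphOf X).Connected) : ¬ G.IsSplit X := fun h =>
  (h G.s).elim (fun h => h.2 (hX.preconnected _ _)) (fun h => h.2 .rfl)

theorem connected_or_isSplit_of_forall_reachable (G : TTGraph) {X : Finset G.E}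
    (h : ∀ w, (G.graphOf X).Reachable w G.s ∨ (G.graphOf X).Reachable w G.t) :
    (G.graphOf X).Connected ∨ G.IsSplit X := by
  by_cases hts : (G.graphOf X).Reachable G.t G.s
  · have hs : ∀ w, (G.graphOf X).Reachable w G.s := fun w => (h w).elim id (·.trans hts)
    exact .inl { preconnected a b := (hs a).trans (hs b).symm, nonempty := ⟨G.s⟩ }
  · refine .inr fun w => ?_
    rcases h w with hw | hw
    · exact .inl ⟨hw, fun hw' => hts (hw'.symm.trans hw)⟩
    · exact .inr ⟨hw, fun hw' => hts (hw.symm.trans hw')⟩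

section SubstAll

variable {H G : TTGraph} {o : H.E → H.V × H.V} (f : H.E → Finset G.E)

def substAllMk (H G : TTGraph) (o : H.E → H.V × H.V) :
    H.V ⊕ H.E × G.V → (H.substAll G o).V :=
  Quot.mk _

local notation "π" => substAllMk H G o

/-- The subgraph of `H(G)` whose copy of `G` on the edge `e` has edge set `f e`. -/
noncomputable abbrev substAllGraph (o : H.E → H.V × H.V) : SimpleGraph (H.substAll G o).V :=
  (H.substAll G o).graphOf (piEquivProd H.E G.E f)

noncomputable def connectedCopies : Finset H.E := {e | (G.graphOf (f e)).Connected}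

theorem substAll_s : (H.substAll G o).s = π (inl H.s) := rfl

theorem substAll_t : (H.substAll G o).t = π (inl H.t) := rfl

theorem mk_inr_source (e : H.E) : π (inr (e, G.s)) = π (inl (o e).1) :=
  (Quot.sound (.inl ⟨e, rfl, rfl⟩)).symm

theorem mk_inr_sink (e : H.E) : π (inr (e, G.t)) = π (inl (o e).2) :=
  (Quot.sound (.inr ⟨e, rfl, rfl⟩)).symm

theorem exists_of_substAllGraph_adj {x y : (H.substAll G o).V}
    (h : (substAllGraph f o).Adj x y) :
    ∃ e u v, (G.graphOf (f e)).Adj u v ∧ x = π (inr (e, u)) ∧ y = π (inr (e, v)) := by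
  obtain ⟨hne, ⟨e, a⟩, ha, hends⟩ := h
  replace ha : a ∈ f e := mem_piEquivProd.mp ha
  obtain ⟨⟨u, v⟩, huv⟩ := Quot.exists_rep (G.ends a)
  change (G.ends a).map (π ∘ inr ∘ Prod.mk e) = s(x, y) at hends
  rw [← huv] at hends
  rcases Sym2.eq_iff.mp hends with ⟨rfl, rfl⟩ | ⟨rfl, rfl⟩
  · exact ⟨e, u, v, ⟨fun h => hne (h ▸ rfl), a, ha, huv.symm⟩, rfl, rfl⟩
  · refine ⟨e, v, u, ⟨fun h => hne (h ▸ rfl), a, ha, ?_⟩, rfl, rfl⟩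
    rw [← huv, Sym2.eq_swap]

theorem reachable_substAllGraph_copy {e : H.E} {u v : G.V}
    (h : (G.graphOf (f e)).Reachable u v) :
    (substAllGraph f o).Reachable (π (inr (e, u))) (π (inr (e, v))) := by
  refine h.map_of_adj (fun w => π (inr (e, w))) fun a b hab => ?_
  obtain ⟨-, x, hx, hends⟩ := hab
  by_cases hab : π (inr (e, a)) = π (inr (e, b))
  · exact hab ▸ .rfl
  · refine SimpleGraph.Adj.reachable ⟨hab, (e, x), mem_piEquivProd.mpr hx, ?_⟩
    change (G.ends x).map (π ∘ inr ∘ Prod.mk e) = _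
    rw [hends, Sym2.map_mk]
    rfl

theorem not_reachable_mk_inl_of_stranded {e : H.E} {w : G.V}
    (hws : ¬ (G.graphOf (f e)).Reachable w G.s) (hwt : ¬ (G.graphOf (f e)).Reachable w G.t)
    (v : H.V) : ¬ (substAllGraph f o).Reachable (π (inr (e, w))) (π (inl v)) := fun h => by
  let P : (H.substAll G o).V → Prop :=
    Quot.lift (Sum.elim (fun _ => False)
      fun x => x.1 = e ∧ (G.graphOf (f e)).Reachable x.2 w) <| by
      rintro _ _ (⟨e', rfl, rfl⟩ | ⟨e', rfl, rfl⟩) <;>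
        simp only [elim_inl, elim_inr, eq_iff_iff, false_iff, not_and] <;> rintro rfl h
      exacts [hws h.symm, hwt h.symm]
  refine (h.iff_of_adj (P := P) fun x y hxy => ?_).mp ⟨rfl, .rfl⟩
  obtain ⟨e', u, v, huv, rfl, rfl⟩ := exists_of_substAllGraph_adj f hxy
  change e' = e ∧ _ ↔ e' = e ∧ _
  rcases eq_or_ne e' e with rfl | he
  · exact and_congr_right fun _ => ⟨huv.reachable.symm.trans, huv.reachable.trans⟩
  · simp [he]

theorem forall_connected_or_isSplit_of_reachable
    (h : ∀ e u, ∃ v, (substAllGraph f o).Reachable (π (inr (e, u))) (π (inl v))) :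
    ∀ e, (G.graphOf (f e)).Connected ∨ G.IsSplit (f e) := fun e =>
  G.connected_or_isSplit_of_forall_reachable fun w => by
    by_contra hw
    obtain ⟨v, hv⟩ := h e w
    exact not_reachable_mk_inl_of_stranded f (not_or.mp hw).1 (not_or.mp hw).2 v hv

/-- Sends the copy of `G` on `e` onto the ends of `e`. The sink is sent to `(o e).2` even when
it reaches the source, so that the map respects the identifications made in `H(G)`. -/
noncomputable def copyProj (o : H.E → H.V × H.V) (e : H.E) (u : G.V) : H.V :=
  if u ≠ G.t ∧ (G.graphOf (f e)).Reachable u G.s then (o e).1 else (o e).2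

noncomputable def substAllProj (o : H.E → H.V × H.V) : (H.substAll G o).V → H.V :=
  Quot.lift (Sum.elim id fun x => copyProj f o x.1 x.2) <| by
    rintro _ _ (⟨e, rfl, rfl⟩ | ⟨e, rfl, rfl⟩) <;> simp [copyProj, G.hst]

theorem copyProj_eq_or (e : H.E) (u : G.V) :
    copyProj f o e u = (o e).1 ∨ copyProj f o e u = (o e).2 := by
  unfold copyProj
  split_ifs <;> simp

theorem copyProj_eq_of_adj {e : H.E} {u v : G.V} (hs : G.IsSplit (f e))
    (huv : (G.graphOf (f e)).Adj u v) : copyProj f o e u = copyProj f o e v := by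
  have hsink : ∀ w, w ≠ G.t ∧ (G.graphOf (f e)).Reachable w G.s ↔
      (G.graphOf (f e)).Reachable w G.s := fun w =>
    and_iff_right_of_imp fun hws hwt => (hs G.t).elim (·.2 .rfl) (·.2 (hwt ▸ hws))
  simp only [copyProj, hsink]
  congr 1
  exact propext ⟨huv.reachable.symm.trans, huv.reachable.trans⟩

theorem reachable_substAllProj_of_adj (ho : ∀ e, H.ends e = s((o e).1, (o e).2))
    (hcs : ∀ e, (G.graphOf (f e)).Connected ∨ G.IsSplit (f e))
    {x y : (H.substAll G o).V} (h : (substAllGraph f o).Adj x y) :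
    (H.graphOf (connectedCopies f)).Reachable (substAllProj f o x) (substAllProj f o y) := by
  obtain ⟨e, u, v, huv, rfl, rfl⟩ := exists_of_substAllGraph_adj f h
  change (H.graphOf _).Reachable (copyProj f o e u) (copyProj f o e v)
  rcases hcs e with hc | hs
  · have hends : (H.graphOf (connectedCopies f)).Reachable (o e).1 (o e).2 :=
      H.reachable_graphOf_of_mem (by simpa [connectedCopies] using hc) (ho e)
    rcases copyProj_eq_or f e u with hu | hu <;> rcases copyProj_eq_or f e v with hv | hv <;>
      rw [hu, hv]
    exacts [hends, hends.symm]
  · rw [copyProj_eq_of_adj f hs huv]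

theorem reachable_mk_inl_of_reachable (ho : ∀ e, H.ends e = s((o e).1, (o e).2)) {u v : H.V}
    (h : (H.graphOf (connectedCopies f)).Reachable u v) :
    (substAllGraph f o).Reachable (π (inl u)) (π (inl v)) := by
  refine h.map_of_adj (fun w => π (inl w)) fun a b hab => ?_
  obtain ⟨-, e, he, hends⟩ := hab
  have hc : (G.graphOf (f e)).Connected := by simpa [connectedCopies] using he
  have hcopy := reachable_substAllGraph_copy (o := o) f (hc.preconnected G.s G.t)
  rw [mk_inr_source, mk_inr_sink] at hcopy
  rcases Sym2.eq_iff.mp ((ho e).symm.trans hends) with ⟨rfl, rfl⟩ | ⟨rfl, rfl⟩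
  exacts [hcopy, hcopy.symm]

theorem reachable_mk_inl_substAllProj
    (hcs : ∀ e, (G.graphOf (f e)).Connected ∨ G.IsSplit (f e)) (x : (H.substAll G o).V) :
    (substAllGraph f o).Reachable x (π (inl (substAllProj f o x))) := by
  induction x using Quot.ind with | mk x => ?_
  rcases x with v | ⟨e, u⟩
  · exact .rfl
  change (substAllGraph f o).Reachable _ (π (inl (copyProj f o e u)))
  unfold copyProj
  split_ifs with hu
  · rw [← mk_inr_source]
    exact reachable_substAllGraph_copy f hu.2
  · rw [← mk_inr_sink]
    refine reachable_substAllGraph_copy f ?_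
    by_cases hut : u = G.t
    · rw [hut]
    have hus : ¬ (G.graphOf (f e)).Reachable u G.s := fun h => hu ⟨hut, h⟩
    rcases hcs e with hc | hs
    · exact absurd (hc.preconnected u G.s) hus
    · exact ((hs u).resolve_left fun h => hus h.1).1

theorem substAllGraph_reachable_mk_inl_iff (ho : ∀ e, H.ends e = s((o e).1, (o e).2))
    (hcs : ∀ e, (G.graphOf (f e)).Connected ∨ G.IsSplit (f e))
    (x : (H.substAll G o).V) (v : H.V) :
    (substAllGraph f o).Reachable x (π (inl v)) ↔
      (H.graphOf (connectedCopies f)).Reachable (substAllProj f o x) v :=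
  ⟨(·.map_of_adj _ fun _ _ => reachable_substAllProj_of_adj f ho hcs),
    fun h => (reachable_mk_inl_substAllProj f hcs x).trans (reachable_mk_inl_of_reachable f ho h)⟩

theorem substAllGraph_connected_iff (ho : ∀ e, H.ends e = s((o e).1, (o e).2)) :
    (substAllGraph f o).Connected ↔ (∀ e, (G.graphOf (f e)).Connected ∨ G.IsSplit (f e)) ∧
      (H.graphOf (connectedCopies f)).Connected := by
  constructor
  · intro hK
    have hcs := forall_connected_or_isSplit_of_reachable f fun e u => ⟨H.s, hK.preconnected _ _⟩
    refine ⟨hcs, { preconnected u v := ?_, nonempty := ⟨H.s⟩ }⟩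
    exact (substAllGraph_reachable_mk_inl_iff f ho hcs (π (inl u)) v).mp (hK.preconnected _ _)
  · rintro ⟨hcs, hH⟩
    have hroot : ∀ x, (substAllGraph f o).Reachable x (π (inl H.s)) := fun x =>
      (substAllGraph_reachable_mk_inl_iff f ho hcs x H.s).mpr (hH.preconnected _ _)
    exact { preconnected x y := (hroot x).trans (hroot y).symm, nonempty := ⟨π (inl H.s)⟩ }

theorem isSplit_substAll_iff (ho : ∀ e, H.ends e = s((o e).1, (o e).2)) :
    (H.substAll G o).IsSplit (piEquivProd H.E G.E f) ↔
      (∀ e, (G.graphOf (f e)).Connected ∨ G.IsSplit (f e)) ∧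
        H.IsSplit (connectedCopies f) := by
  constructor
  · intro hK
    have hcs := forall_connected_or_isSplit_of_reachable f fun e u =>
      (hK (π (inr (e, u)))).elim (fun h => ⟨H.s, h.1⟩) (fun h => ⟨H.t, h.1⟩)
    refine ⟨hcs, fun v => ?_⟩
    have := hK (π (inl v))
    rwa [substAll_s, substAll_t, substAllGraph_reachable_mk_inl_iff f ho hcs,
      substAllGraph_reachable_mk_inl_iff f ho hcs] at this
  · rintro ⟨hcs, hH⟩ x
    rw [substAll_s, substAll_t, substAllGraph_reachable_mk_inl_iff f ho hcs,
      substAllGraph_reachable_mk_inl_iff f ho hcs]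
    exact hH (substAllProj f o x)

end SubstAll

theorem sum_substAll_eq {H G : TTGraph} (p : ℂ) {P : Finset (H.E × G.E) → Prop}
    {P' : Finset H.E → Prop} (hP : ∀ f, P (piEquivProd H.E G.E f) ↔
      (∀ e, (G.graphOf (f e)).Connected ∨ G.IsSplit (f e)) ∧ P' (connectedCopies f)) :
    ∑ A, (if P A then (1 - p) ^ #A * p ^ (Fintype.card (H.E × G.E) - #A) else 0) =
      ∑ B, if P' B then G.rel p ^ #B * G.split p ^ (Fintype.card H.E - #B) else 0 := by
  refine ((piEquivProd H.E G.E).sum_comp _).symm.trans ?_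
  simp only [hP, pow_card_mul_pow_card_piEquivProd]
  refine (Fintype.sum_pi_ite_prod_eq (fun X => G.not_isSplit_of_connected (X := X)) P'
    fun X => (1 - p) ^ #X * p ^ (Fintype.card G.E - #X)).trans ?_
  simp only [rel, Multigraph.rel, split, sum_filter]

theorem rel_substAll {H G : TTGraph} {o : H.E → H.V × H.V}
    (ho : ∀ e, H.ends e = s((o e).1, (o e).2)) (p : ℂ) :
    (H.substAll G o).rel p = ∑ B, if (H.graphOf B).Connected then
      G.rel p ^ #B * G.split p ^ (Fintype.card H.E - #B) else 0 :=
  sum_substAll_eq p fun f => substAllGraph_connected_iff f ho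

theorem split_substAll {H G : TTGraph} {o : H.E → H.V × H.V}
    (ho : ∀ e, H.ends e = s((o e).1, (o e).2)) (p : ℂ) :
    (H.substAll G o).split p = ∑ B, if H.IsSplit B then
      G.rel p ^ #B * G.split p ^ (Fintype.card H.E - #B) else 0 :=
  sum_substAll_eq p fun f => isSplit_substAll_iff f ho

end TTGraph

theorem substAll_rel_split_yVirt_general (H G : TTGraph)
    (o : H.toMultigraph.E → H.V × H.V)
    (ho : ∀ e, H.ends e = s((o e).1, (o e).2))
    (p : ℂ) (hS : G.split p ≠ 0) (hy : G.yVirt p ≠ 0) :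
    (H.substAll G o).rel p
        = (G.rel p + G.split p) ^ (Fintype.card H.toMultigraph.E) * H.rel (G.yVirt p)⁻¹ ∧
    (H.substAll G o).split p
        = (G.rel p + G.split p) ^ (Fintype.card H.toMultigraph.E) * H.split (G.yVirt p)⁻¹ ∧
    ((H.substAll G o).split p ≠ 0 →
      (H.substAll G o).yVirt p = H.yVirt (G.yVirt p)⁻¹) := by
  have hy' : G.yVirt p = (G.rel p + G.split p) / G.split p := div_add_one hS
  have hRS : G.rel p + G.split p ≠ 0 := fun h => hy (by rw [hy', h, zero_div])
  have hq : (G.yVirt p)⁻¹ = G.split p / (G.rel p + G.split p) := by rw [hy', inv_div]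
  have h1q : 1 - (G.yVirt p)⁻¹ = G.rel p / (G.rel p + G.split p) := by
    rw [hq, one_sub_div hRS, add_sub_cancel_right]
  have hrescale : ∀ Q : Finset H.E → Prop,
      (∑ B, if Q B then G.rel p ^ #B * G.split p ^ (Fintype.card H.E - #B) else 0) =
        (G.rel p + G.split p) ^ Fintype.card H.E * ∑ B, if Q B then
          (1 - (G.yVirt p)⁻¹) ^ #B * (G.yVirt p)⁻¹ ^ (Fintype.card H.E - #B) else 0 := by
    intro Q
    rw [mul_sum]
    refine sum_congr rfl fun B _ => ?_
    rw [mul_ite, mul_zero, h1q, hq, ← pow_mul_pow_eq_add_pow_mul hRS (card_le_univ B)]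
  have hrel : (H.substAll G o).rel p =
      (G.rel p + G.split p) ^ Fintype.card H.E * H.rel (G.yVirt p)⁻¹ :=
    (TTGraph.rel_substAll ho p).trans (hrescale _)
  have hsplit : (H.substAll G o).split p =
      (G.rel p + G.split p) ^ Fintype.card H.E * H.split (G.yVirt p)⁻¹ :=
    (TTGraph.split_substAll ho p).trans (hrescale _)
  refine ⟨hrel, hsplit, fun h => ?_⟩
  rw [TTGraph.yVirt.eq_1 (H.substAll G o), TTGraph.yVirt.eq_1 H, hrel, hsplit,
    mul_div_mul_left _ _ (left_ne_zero_of_mul (hsplit ▸ h))]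

/-- Substituting a connected two-terminal graph `G` for every edge of
`H` gives `R(H(G);p) = (R(G;p)+S(G;p))^{|E(H)|} · R(H; 1/ŷ_G(p))` and
`S(H(G);p) = (R(G;p)+S(G;p))^{|E(H)|} · S(H; 1/ŷ_G(p))`; consequently
`ŷ_{H(G)}(p) = ŷ_H(1/ŷ_G(p))` as rational functions (stated pointwise wherever the
denominators do not vanish). -/
theorem substAll_rel_split_yVirt (H G : TTGraph)
    (hG : (G.toMultigraph.graphOf (Finset.univ : Finset G.toMultigraph.E)).Connected)
    (o : H.toMultigraph.E → H.V × H.V)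
    (ho : ∀ e, H.ends e = s((o e).1, (o e).2))
    (p : ℂ) (hS : G.split p ≠ 0) (hy : G.yVirt p ≠ 0) :
    (H.substAll G o).rel p
        = (G.rel p + G.split p) ^ (Fintype.card H.toMultigraph.E) * H.rel (G.yVirt p)⁻¹ ∧
    (H.substAll G o).split p
        = (G.rel p + G.split p) ^ (Fintype.card H.toMultigraph.E) * H.split (G.yVirt p)⁻¹ ∧
    ((H.substAll G o).split p ≠ 0 →
      (H.substAll G o).yVirt p = H.yVirt (G.yVirt p)⁻¹) :=
  substAll_rel_split_yVirt_general H G o ho p hS hy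
end
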